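/- arXiv:2505.00524 — 5 statements merged into one kernel-verified Lean document; each statement's English description precedes it below -/
import Mathlib

section
/- Let D be a nonempty set and let H and V be binary relations on D such that: (i) for every x ∈ D there exists y with H(x,y); (ii) for every x ∈ D there exists y with V(x,y); (iii) for all x, y ∈ D, (∃z, H(x,z) ∧ V(z,y)) holds if and only if (∃z, V(x,z) ∧ H(z,y)) holds. Then for every a ∈ D there exists a function g : ℕ × ℕ → D with g(0,0) = a such that H(g(i,j), g(i+1,j)) and V(g(i,j), g(i,j+1)) for all i, j ∈ ℕ. -/
/-!
Condition (iii) says that the relations `H` and `V` commute under relational composition.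
Any finite `n × n` grid extends to an `(n + 1) × (n + 1)` grid: the new column is built
from the top down, each new point obtained by turning the path `V` then `H` around a square
into a path `H` then `V`; the new row is the same construction with the roles of `H` and `V`
exchanged. Iterating from the one-point grid `a` gives a chain of compatible square grids,
whose union is the required grid on `ℕ × ℕ`.
-/

open Set

lemma exists_parallel_chain {α : Type*} {R S : α → α → Prop} (hR : ∀ x, ∃ y, R x y)
    (hSR : ∀ x y, (∃ z, S x z ∧ R z y) → ∃ z, R x z ∧ S z y) (n : ℕ) (v : ℕ → α)
    (hv : ∀ j < n, S (v j) (v (j + 1))) :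
    ∃ c : ℕ → α, (∀ j ≤ n, R (v j) (c j)) ∧ ∀ j < n, S (c j) (c (j + 1)) := by
  induction n generalizing v with
  | zero =>
    obtain ⟨y, hy⟩ := hR (v 0)
    refine ⟨fun _ => y, fun j hj => ?_, fun j hj => absurd hj j.not_lt_zero⟩
    rwa [Nat.le_zero.mp hj]
  | succ n ih =>
    obtain ⟨c, hRc, hSc⟩ := ih (fun j => v (j + 1)) fun j hj => hv (j + 1) (by omega)
    obtain ⟨z, hRz, hSz⟩ := hSR (v 0) (c 0) ⟨v 1, hv 0 n.succ_pos, hRc 0 n.zero_le⟩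
    refine ⟨fun j => Nat.casesOn j z c, fun j hj => ?_, fun j hj => ?_⟩
    · cases j with
      | zero => exact hRz
      | succ j => exact hRc j (by omega)
    · cases j with
      | zero => exact hSz
      | succ j => exact hSc j (by omega)

section Grid

variable {D : Type*} {H V : D → D → Prop}

def IsGridOn (H V : D → D → Prop) (m n : ℕ) (f : ℕ × ℕ → D) : Prop :=
  (∀ i < m, ∀ j ≤ n, H (f (i, j)) (f (i + 1, j))) ∧ ∀ i ≤ m, ∀ j < n, V (f (i, j)) (f (i, j + 1))

lemma isGridOn_zero (f : ℕ × ℕ → D) : IsGridOn H V 0 0 f :=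
  ⟨fun i hi => absurd hi i.not_lt_zero, fun _ _ j hj => absurd hj j.not_lt_zero⟩

lemma IsGridOn.swap {m n : ℕ} {f : ℕ × ℕ → D} (hf : IsGridOn H V m n f) :
    IsGridOn V H n m (f ∘ Prod.swap) :=
  ⟨fun i hi j hj => hf.2 j hj i hi, fun i hi j hj => hf.1 j hj i hi⟩

lemma IsGridOn.exists_extend_right (hH : ∀ x, ∃ y, H x y)
    (hVH : ∀ x y, (∃ z, V x z ∧ H z y) → ∃ z, H x z ∧ V z y) {m n : ℕ} {f : ℕ × ℕ → D}
    (hf : IsGridOn H V m n f) :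
    ∃ f', IsGridOn H V (m + 1) n f' ∧ EqOn f' f (Iic (m, n)) := by
  obtain ⟨c, hHc, hVc⟩ :=
    exists_parallel_chain hH hVH n (fun j => f (m, j)) fun j hj => hf.2 m le_rfl j hj
  refine ⟨fun p => if p.1 = m + 1 then c p.2 else f p, ⟨fun i hi j hj => ?_, fun i hi j hj => ?_⟩,
    fun p hp => if_neg (by have := (Prod.mk_le_mk.mp hp).1; omega)⟩
  · rcases Nat.lt_succ_iff_lt_or_eq.mp hi with hi | rfl
    · simpa [hi.ne, (hi.trans m.lt_succ_self).ne] using hf.1 i hi j hj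
    · simpa using hHc j hj
  · rcases hi.lt_or_eq with hi | rfl
    · simpa [hi.ne] using hf.2 i (Nat.lt_succ_iff.mp hi) j hj
    · simpa using hVc j hj

lemma IsGridOn.exists_extend_up (hV : ∀ x, ∃ y, V x y)
    (hHV : ∀ x y, (∃ z, H x z ∧ V z y) → ∃ z, V x z ∧ H z y) {m n : ℕ} {f : ℕ × ℕ → D}
    (hf : IsGridOn H V m n f) :
    ∃ f', IsGridOn H V m (n + 1) f' ∧ EqOn f' f (Iic (m, n)) := by
  obtain ⟨f', hf', heq⟩ := hf.swap.exists_extend_right hV hHV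
  refine ⟨f' ∘ Prod.swap, hf'.swap, fun p hp => ?_⟩
  simpa using heq (show p.swap ∈ Iic (n, m) from Prod.swap_le_swap.mpr hp)

lemma IsGridOn.exists_extend_square (hH : ∀ x, ∃ y, H x y) (hV : ∀ x, ∃ y, V x y)
    (hconf : ∀ x y, (∃ z, H x z ∧ V z y) ↔ (∃ z, V x z ∧ H z y)) {n : ℕ} {f : ℕ × ℕ → D}
    (hf : IsGridOn H V n n f) :
    ∃ f', IsGridOn H V (n + 1) (n + 1) f' ∧ EqOn f' f (Iic (n, n)) := by
  obtain ⟨f₁, hf₁, heq₁⟩ := hf.exists_extend_right hH fun x y => (hconf x y).mpr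
  obtain ⟨f₂, hf₂, heq₂⟩ := hf₁.exists_extend_up hV fun x y => (hconf x y).mp
  exact ⟨f₂, hf₂, fun p hp =>
    (heq₂ (Iic_subset_Iic.mpr (by simp) hp)).trans (heq₁ (Iic_subset_Iic.mpr (by simp) hp))⟩

lemma exists_seq_isGridOn (hH : ∀ x, ∃ y, H x y) (hV : ∀ x, ∃ y, V x y)
    (hconf : ∀ x y, (∃ z, H x z ∧ V z y) ↔ (∃ z, V x z ∧ H z y)) (a : D) :
    ∃ F : ℕ → ℕ × ℕ → D, F 0 (0, 0) = a ∧ (∀ n, IsGridOn H V n n (F n)) ∧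
      ∀ n, EqOn (F (n + 1)) (F n) (Iic (n, n)) := by
  have step (n : ℕ) (f : {f // IsGridOn H V n n f}) :
      ∃ f' : {f // IsGridOn H V (n + 1) (n + 1) f}, EqOn f'.1 f.1 (Iic (n, n)) := by
    obtain ⟨f', hf', heq⟩ := f.2.exists_extend_square hH hV hconf
    exact ⟨⟨f', hf'⟩, heq⟩
  choose extend hextend using step
  let F (n : ℕ) : {f // IsGridOn H V n n f} := Nat.rec ⟨fun _ => a, isGridOn_zero _⟩ extend n
  exact ⟨fun n => (F n).1, rfl, fun n => (F n).2, fun n => hextend n (F n)⟩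

lemma exists_grid_of_seq_isGridOn (F : ℕ → ℕ × ℕ → D) (hF : ∀ n, IsGridOn H V n n (F n))
    (hFF : ∀ n, EqOn (F (n + 1)) (F n) (Iic (n, n))) :
    ∃ g : ℕ × ℕ → D, g (0, 0) = F 0 (0, 0) ∧
      ∀ i j : ℕ, H (g (i, j)) (g (i + 1, j)) ∧ V (g (i, j)) (g (i, j + 1)) := by
  have hmono {n N : ℕ} (hnN : n ≤ N) : EqOn (F N) (F n) (Iic (n, n)) := by
    induction N, hnN using Nat.le_induction with
    | base => exact eqOn_refl _ _
    | succ N hnN ih =>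
      exact fun p hp => (hFF N (Iic_subset_Iic.mpr (by simpa using hnN) hp)).trans (ih hp)
  let g (p : ℕ × ℕ) : D := F (max p.1 p.2) p
  have hg {N : ℕ} {p : ℕ × ℕ} (hp : p ≤ (N, N)) : g p = F N p :=
    (hmono (max_le (Prod.mk_le_mk.mp hp).1 (Prod.mk_le_mk.mp hp).2)
      (Prod.mk_le_mk.mpr ⟨le_max_left _ _, le_max_right _ _⟩)).symm
  refine ⟨g, rfl, fun i j => ⟨?_, ?_⟩⟩
  · rw [hg (N := i + j + 1) (by simp; omega), hg (N := i + j + 1) (by simp; omega)]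
    exact (hF _).1 i (by omega) j (by omega)
  · rw [hg (N := i + j + 1) (by simp; omega), hg (N := i + j + 1) (by simp; omega)]
    exact (hF _).2 i (by omega) j (by omega)

end Grid

theorem stmt5_general {D : Type} (H V : D → D → Prop)
    (hH : ∀ x, ∃ y, H x y) (hV : ∀ x, ∃ y, V x y)
    (hconf : ∀ x y, (∃ z, H x z ∧ V z y) ↔ (∃ z, V x z ∧ H z y)) :
    ∀ a : D, ∃ g : ℕ × ℕ → D, g (0, 0) = a ∧
      ∀ i j : ℕ, H (g (i, j)) (g (i + 1, j)) ∧ V (g (i, j)) (g (i, j + 1)) := by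
  intro a
  obtain ⟨F, hF0, hF, hFF⟩ := exists_seq_isGridOn hH hV hconf a
  exact hF0 ▸ exists_grid_of_seq_isGridOn F hF hFF

/-- If `H` and `V` are serial binary relations on a nonempty
set `D` satisfying the commuting-squares (confluence) condition
`(∃z, H x z ∧ V z y) ↔ (∃z, V x z ∧ H z y)`, then every `a ∈ D` is the seed of
an `ℕ × ℕ` grid `g` with `H`-edges horizontally and `V`-edges vertically. -/
theorem stmt5 {D : Type} [Nonempty D] (H V : D → D → Prop)
    (hH : ∀ x, ∃ y, H x y) (hV : ∀ x, ∃ y, V x y)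
    (hconf : ∀ x y, (∃ z, H x z ∧ V z y) ↔ (∃ z, V x z ∧ H z y)) :
    ∀ a : D, ∃ g : ℕ × ℕ → D, g (0, 0) = a ∧
      ∀ i j : ℕ, H (g (i, j)) (g (i + 1, j)) ∧ V (g (i, j)) (g (i, j + 1)) :=
  stmt5_general H V hH hV hconf
end

section
/- Let InfW be the modal formula □∃x ¬Q(x) ∧ □∀x (¬Q(x) → ◇Q(x)) ∧ □∀x (Q(x) → □Q(x)). If M = ⟨W, R, D, I⟩ is a predicate Kripke model with expanding domains whose accessibility relation R is reflexive and transitive, and M, w₀ ⊨ InfW for some w₀ ∈ W, then W is infinite. -/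
/-!
The extension of `Q` grows strictly along `R` inside the cone `{v | R w₀ v}`: at any `v` there
is some `a ∉ Q(v)`, and `a` becomes `Q` at a successor `u`, while heredity of `Q` gives
`Q(v) ⊆ Q(u)`. A finite cone would contain a world whose extension of `Q` is maximal.
-/

theorem Set.infinite_of_forall_exists_lt_apply {ι α : Type*} [Preorder α] (f : ι → α)
    {s : Set ι} (hs : s.Nonempty) (h : ∀ i ∈ s, ∃ j ∈ s, f i < f j) : s.Infinite := by
  intro hfin
  obtain ⟨i, hi, hmax⟩ := hfin.exists_maximalFor f s hs
  obtain ⟨j, hj, hij⟩ := h i hi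
  exact hij.not_ge (hmax hj hij.le)

theorem stmt12_general {W 𝔇 : Type} (R : W → W → Prop)
    (hrefl : ∀ w, R w w) (htrans : ∀ u v w, R u v → R v w → R u w)
    (D : W → Set 𝔇)
    (I : W → Set 𝔇) (hI : ∀ w, I w ⊆ D w) (w₀ : W)
    -- `□∃x ¬Q(x)` at `w₀`:
    (h1 : ∀ v, R w₀ v → ∃ a ∈ D v, a ∉ I v)
    -- `□∀x (¬Q(x) → ◇Q(x))` at `w₀`:
    (h2 : ∀ v, R w₀ v → ∀ a ∈ D v, a ∉ I v → ∃ u, R v u ∧ a ∈ I u)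
    -- `□∀x (Q(x) → □Q(x))` at `w₀`:
    (h3 : ∀ v, R w₀ v → ∀ a ∈ D v, a ∈ I v → ∀ u, R v u → a ∈ I u) :
    Infinite W := by
  have hcone : {v | R w₀ v}.Infinite := by
    refine Set.infinite_of_forall_exists_lt_apply I ⟨w₀, hrefl w₀⟩ fun v hv => ?_
    obtain ⟨a, haD, haI⟩ := h1 v hv
    obtain ⟨u, hvu, hau⟩ := h2 v hv a haD haI
    have hmono : I v ⊆ I u := fun b hb => h3 v hv b (hI v hb) hb u hvu
    exact ⟨u, htrans _ _ _ hv hvu, (Set.ssubset_iff_of_subset hmono).mpr ⟨a, hau, haI⟩⟩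
  exact Set.infinite_univ_iff.mp (hcone.mono (Set.subset_univ _))

/-- Let `M = ⟨W, R, D, I⟩` be a predicate Kripke model with
expanding domains, `R` reflexive and transitive, and `I` interpreting the
unary letter `Q` (with `I w ⊆ D w`).  If the formula
`InfW = □∃x ¬Q(x) ∧ □∀x (¬Q(x) → ◇Q(x)) ∧ □∀x (Q(x) → □Q(x))`
is true at some world `w₀` (its three conjuncts being unfolded below), then
the set `W` of worlds is infinite. -/
theorem stmt12 {W 𝔇 : Type} (R : W → W → Prop)
    (hrefl : ∀ w, R w w) (htrans : ∀ u v w, R u v → R v w → R u w)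
    (D : W → Set 𝔇) (hexp : ∀ u w, R u w → D u ⊆ D w)
    (hne : ∀ w, (D w).Nonempty)
    (I : W → Set 𝔇) (hI : ∀ w, I w ⊆ D w) (w₀ : W)
    -- `□∃x ¬Q(x)` at `w₀`:
    (h1 : ∀ v, R w₀ v → ∃ a ∈ D v, a ∉ I v)
    -- `□∀x (¬Q(x) → ◇Q(x))` at `w₀`:
    (h2 : ∀ v, R w₀ v → ∀ a ∈ D v, a ∉ I v → ∃ u, R v u ∧ a ∈ I u)
    -- `□∀x (Q(x) → □Q(x))` at `w₀`:
    (h3 : ∀ v, R w₀ v → ∀ a ∈ D v, a ∈ I v → ∀ u, R v u → a ∈ I u) :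
    Infinite W :=
  stmt12_general R hrefl htrans D I hI w₀ h1 h2 h3
end

section
/- There exists a predicate Kripke model M based on the frame ⟨ℕ, ≤⟩ with expanding finite local domains such that M, 0 ⊨ □∃x ¬Q(x) ∧ □∀x (¬Q(x) → ◇Q(x)) ∧ □∀x (Q(x) → □Q(x)). Concretely, taking D_k = {0, …, k} and declaring Q(m) true at world k iff m < k yields such a model. -/
/-- There is a predicate Kripke model based on the frame
`⟨ℕ, ≤⟩` with expanding *finite* local domains satisfying
`InfW = □∃x ¬Q(x) ∧ □∀x (¬Q(x) → ◇Q(x)) ∧ □∀x (Q(x) → □Q(x))` at the world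
`0`.  Concretely, the domains `D k = {0, …, k}` with `Q(m)` true at world `k`
iff `m < k` yield such a model. -/
theorem stmt13 :
    ∃ (D : ℕ → Set ℕ) (I : ℕ → Set ℕ),
      D = (fun k => {m : ℕ | m ≤ k}) ∧ I = (fun k => {m : ℕ | m < k}) ∧
      (∀ k, (D k).Finite) ∧ (∀ k, (D k).Nonempty) ∧
      (∀ k k' : ℕ, k ≤ k' → D k ⊆ D k') ∧ (∀ k, I k ⊆ D k) ∧
      -- `□∃x ¬Q(x)` at world `0` in the frame `⟨ℕ, ≤⟩`:
      (∀ v : ℕ, 0 ≤ v → ∃ a ∈ D v, a ∉ I v) ∧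
      -- `□∀x (¬Q(x) → ◇Q(x))` at world `0`:
      (∀ v : ℕ, 0 ≤ v → ∀ a ∈ D v, a ∉ I v → ∃ u, v ≤ u ∧ a ∈ I u) ∧
      -- `□∀x (Q(x) → □Q(x))` at world `0`:
      (∀ v : ℕ, 0 ≤ v → ∀ a ∈ D v, a ∈ I v → ∀ u, v ≤ u → a ∈ I u) :=
  ⟨_, _, rfl, rfl,
    Set.finite_Iic,
    fun _ => Set.nonempty_Iic,
    fun _ _ => Set.Iic_subset_Iic.mpr,
    fun _ => Set.Iio_subset_Iic_self,
    fun v _ => ⟨v, Set.self_mem_Iic, Set.self_notMem_Iio⟩,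
    fun v _ _ ha _ => ⟨v + 1, v.le_succ, Nat.lt_succ_of_le ha⟩,
    fun _ _ _ _ ha _ hu => lt_of_lt_of_le ha hu⟩
end

section
/- Let F = ⟨W, R⟩ be a finite Kripke frame, let P₁, …, Pₙ be unary predicate letters, and let φ be a modal predicate formula containing no predicate letters other than P₁, …, Pₙ. If φ is refuted at a world w₀ of some predicate Kripke model M = ⟨W, R, D, I⟩ with expanding domains based on F, then φ is refuted at w₀ in a model M' = ⟨W, R, D', I'⟩ based on F whose global domain has at most 2^{|W|·(n+1)} elements. -/
/-- Modal predicate formulas over a signature of predicate letters `P` with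
arities `ar`, with individual variables named by natural numbers. -/
inductive MForm (P : Type) (ar : P → ℕ) : Type
  | falsum : MForm P ar
  | atom (p : P) (ts : Fin (ar p) → ℕ) : MForm P ar
  | conj (φ ψ : MForm P ar) : MForm P ar
  | disj (φ ψ : MForm P ar) : MForm P ar
  | impl (φ ψ : MForm P ar) : MForm P ar
  | box (φ : MForm P ar) : MForm P ar
  | all (x : ℕ) (φ : MForm P ar) : MForm P ar
  | ex (x : ℕ) (φ : MForm P ar) : MForm P ar

/-- Truth in a predicate Kripke model with expanding domains. -/
def MVal {P : Type} {ar : P → ℕ} {W 𝔇 : Type} (R : W → W → Prop)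
    (D : W → Set 𝔇) (I : W → (p : P) → (Fin (ar p) → 𝔇) → Prop) :
    W → (ℕ → 𝔇) → MForm P ar → Prop
  | _, _, .falsum => False
  | w, g, .atom p ts => I w p fun i => g (ts i)
  | w, g, .conj φ ψ => MVal R D I w g φ ∧ MVal R D I w g ψ
  | w, g, .disj φ ψ => MVal R D I w g φ ∨ MVal R D I w g ψ
  | w, g, .impl φ ψ => MVal R D I w g φ → MVal R D I w g ψ
  | w, g, .box φ => ∀ v, R w v → MVal R D I v g φ
  | w, g, .all x φ => ∀ a ∈ D w, MVal R D I w (Function.update g x a) φ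
  | w, g, .ex x φ => ∃ a ∈ D w, MVal R D I w (Function.update g x a) φ

/-!
Identify two individuals when they lie in the same local domains and satisfy the same
predicate letters at the same worlds. Taking the images of the local domains under the map to
classes, and interpreting the letters on classes, gives a model in which every formula has the
same truth value at the images of the assignments: the atomic case holds by construction, and
the quantifier cases because the map commutes with updating an assignment. For unary letters a
class is determined by its membership and predicate flags at each world, so there are at most
`2 ^ (|W| * (n + 1))` classes.
-/

section Image

variable {P : Type} {ar : P → ℕ} {W 𝔇 𝔇' : Type} {R : W → W → Prop} {D : W → Set 𝔇}
  {I : W → (p : P) → (Fin (ar p) → 𝔇) → Prop} {I' : W → (p : P) → (Fin (ar p) → 𝔇') → Prop}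

theorem MVal_image_iff (f : 𝔇 → 𝔇') (hI : ∀ w p ts, I' w p (f ∘ ts) ↔ I w p ts)
    (φ : MForm P ar) (w : W) (g : ℕ → 𝔇) :
    MVal R (fun w => f '' D w) I' w (f ∘ g) φ ↔ MVal R D I w g φ := by
  induction φ generalizing w g with
  | falsum => rfl
  | atom p ts => exact hI w p (g ∘ ts)
  | conj φ ψ ihφ ihψ => exact and_congr (ihφ w g) (ihψ w g)
  | disj φ ψ ihφ ihψ => exact or_congr (ihφ w g) (ihψ w g)
  | impl φ ψ ihφ ihψ => exact imp_congr (ihφ w g) (ihψ w g)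
  | box φ ih => exact forall₂_congr fun v _ => ih v g
  | all x φ ih =>
    simp only [MVal, Set.forall_mem_image, ← Function.comp_update, ih]
  | ex x φ ih =>
    simp only [MVal, Set.exists_mem_image, ← Function.comp_update, ih]

end Image

section Profile

variable {n : ℕ} {W 𝔇 : Type}

open Classical in
/-- The class of `a` in the quotient model: at each world, whether `a` belongs to the local
domain and which letters it satisfies there. -/
noncomputable def profile (D : W → Set 𝔇) (I : W → Fin n → (Fin 1 → 𝔇) → Prop) (a : 𝔇) :
    W → Bool × (Fin n → Bool) :=
  fun w => (decide (a ∈ D w), fun p => decide (I w p fun _ => a))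

def profileInterp (w : W) (p : Fin n) (t : Fin 1 → W → Bool × (Fin n → Bool)) : Prop :=
  (t 0 w).2 p

theorem profileInterp_comp_profile (D : W → Set 𝔇) (I : W → Fin n → (Fin 1 → 𝔇) → Prop)
    (w : W) (p : Fin n) (ts : Fin 1 → 𝔇) :
    profileInterp w p (profile D I ∘ ts) ↔ I w p ts := by
  have hts : (fun _ => ts 0) = ts := funext fun i => congrArg ts (Subsingleton.elim 0 i)
  simp [profileInterp, profile, hts]

theorem ncard_le_two_pow [Fintype W] (s : Set (W → Bool × (Fin n → Bool))) :
    s.ncard ≤ 2 ^ (Fintype.card W * (n + 1)) := by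
  calc s.ncard ≤ Nat.card (W → Bool × (Fin n → Bool)) := Set.ncard_le_card s
    _ = 2 ^ (Fintype.card W * (n + 1)) := by
      rw [Nat.card_fun, Nat.card_prod, Nat.card_fun, Nat.card_eq_fintype_card (α := Bool),
        Fintype.card_bool, Nat.card_eq_fintype_card (α := Fin n), Fintype.card_fin,
        Nat.card_eq_fintype_card, ← pow_succ', ← pow_mul, mul_comm]

end Profile

/-- Let `F = ⟨W, R⟩` be a finite Kripke frame and `φ` a
modal predicate formula whose predicate letters are among the unary letters
`P₁, …, Pₙ` (indexed by `Fin n`).  If `φ` is refuted at a world `w₀` of some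
predicate Kripke model with expanding domains based on `F`, then `φ` is
refuted at `w₀` in such a model whose global domain (the union of the local
domains) has at most `2 ^ (|W| * (n + 1))` elements. -/
theorem stmt16 (n : ℕ) {W : Type} [Fintype W] (R : W → W → Prop)
    (φ : MForm (Fin n) fun _ => 1)
    {𝔇 : Type} (D : W → Set 𝔇) (hexp : ∀ u w, R u w → D u ⊆ D w)
    (hne : ∀ w, (D w).Nonempty)
    (I : W → (p : Fin n) → (Fin 1 → 𝔇) → Prop)
    (w₀ : W) (g : ℕ → 𝔇) (hg : ∀ x, g x ∈ D w₀)
    (h : ¬ MVal R D I w₀ g φ) :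
    ∃ (𝔇' : Type) (D' : W → Set 𝔇')
      (I' : W → (p : Fin n) → (Fin 1 → 𝔇') → Prop) (g' : ℕ → 𝔇'),
      (∀ u w, R u w → D' u ⊆ D' w) ∧ (∀ w, (D' w).Nonempty) ∧
      (⋃ w, D' w).Finite ∧ (⋃ w, D' w).ncard ≤ 2 ^ (Fintype.card W * (n + 1)) ∧
      (∀ x, g' x ∈ D' w₀) ∧ ¬ MVal R D' I' w₀ g' φ := by
  refine ⟨_, fun w => profile D I '' D w, profileInterp, profile D I ∘ g,
    fun u w huw => Set.image_mono (hexp u w huw), fun w => (hne w).image _,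
    Set.toFinite _, ncard_le_two_pow _, fun x => Set.mem_image_of_mem _ (hg x), ?_⟩
  rwa [MVal_image_iff _ (profileInterp_comp_profile D I)]
end

section
/- Let φ be a modal predicate formula whose only predicate letter is a unary letter Q and whose individual variables are among {x, y}, and let ST(φ) be its standard translation into classical first-order logic over a single binary predicate P: ST(Q(v)) = P(v,z) for v ∈ {x,y}, ST commutes with ∧, ∨, →, ⊥ and with quantifiers over x and y, and ST(□ψ) = ∀z ST(ψ). Then φ is true in every predicate Kripke model with constant domains based on a frame ⟨W, W×W⟩ with universal accessibility relation if and only if ST(φ) is true in every classical first-order structure for the language {P}. -/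
/-- Modal formulas with a single unary predicate letter `Q` and individual
variables among `x, y` (represented by `Fin 2`). -/
inductive MF : Type
  | falsum : MF
  | atom (v : Fin 2) : MF            -- `Q(v)`
  | conj (φ ψ : MF) : MF
  | disj (φ ψ : MF) : MF
  | impl (φ ψ : MF) : MF
  | box (φ : MF) : MF
  | all (v : Fin 2) (φ : MF) : MF
  | ex (v : Fin 2) (φ : MF) : MF

/-- Classical first-order formulas with a single binary predicate letter `P`
and variables named by natural numbers (`0 = x`, `1 = y`, `2 = z`). -/
inductive CF : Type
  | falsum : CF
  | atom (a b : ℕ) : CF              -- `P(a, b)`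
  | conj (φ ψ : CF) : CF
  | disj (φ ψ : CF) : CF
  | impl (φ ψ : CF) : CF
  | all (x : ℕ) (φ : CF) : CF
  | ex (x : ℕ) (φ : CF) : CF

/-- The standard translation: `STr(Q(v)) = P(v, z)` (with `z` the variable `2`),
`STr` commutes with the connectives and with quantifiers over `x, y`, and
`STr(□ψ) = ∀z STr(ψ)`. -/
def STr : MF → CF
  | .falsum => .falsum
  | .atom v => .atom (v : ℕ) 2
  | .conj φ ψ => .conj (STr φ) (STr ψ)
  | .disj φ ψ => .disj (STr φ) (STr ψ)
  | .impl φ ψ => .impl (STr φ) (STr ψ)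
  | .box φ => .all 2 (STr φ)
  | .all v φ => .all (v : ℕ) (STr φ)
  | .ex v φ => .ex (v : ℕ) (STr φ)

/-- Tarskian truth of a classical formula in a structure `⟨A, Pr⟩` under an
assignment `g : ℕ → A`. -/
def CVal {A : Type} (Pr : A → A → Prop) : (ℕ → A) → CF → Prop
  | _, .falsum => False
  | g, .atom a b => Pr (g a) (g b)
  | g, .conj φ ψ => CVal Pr g φ ∧ CVal Pr g ψ
  | g, .disj φ ψ => CVal Pr g φ ∨ CVal Pr g ψ
  | g, .impl φ ψ => CVal Pr g φ → CVal Pr g ψ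
  | g, .all x φ => ∀ c : A, CVal Pr (Function.update g x c) φ
  | g, .ex x φ => ∃ c : A, CVal Pr (Function.update g x c) φ

/-- Truth of a modal formula in a predicate Kripke model with constant domain
`D`, based on the frame `⟨W, W × W⟩` with the universal accessibility
relation (so `□ψ` is true at `w` iff `ψ` is true at every world). -/
def MValS5 {W D : Type} (I : W → D → Prop) : W → (Fin 2 → D) → MF → Prop
  | _, _, .falsum => False
  | w, g, .atom v => I w (g v)
  | w, g, .conj φ ψ => MValS5 I w g φ ∧ MValS5 I w g ψ
  | w, g, .disj φ ψ => MValS5 I w g φ ∨ MValS5 I w g ψ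
  | w, g, .impl φ ψ => MValS5 I w g φ → MValS5 I w g ψ
  | _, g, .box φ => ∀ v : W, MValS5 I v g φ
  | w, g, .all v φ => ∀ a : D, MValS5 I w (Function.update g v a) φ
  | w, g, .ex v φ => ∃ a : D, MValS5 I w (Function.update g v a) φ

/-! Both directions are instances of one transfer principle: given surjections `fD : A → D` and
`fW : A → W`, the classical structure on `A` with `P(a, b) :↔ I (fW b) (fD a)` satisfies `ST(φ)`
under `G` exactly when the Kripke model satisfies `φ` at the world `fW (G z)` under `fD ∘ G`;
surjectivity is what lets quantifiers over `A` range over all individuals and all worlds. Taking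
`A = W = D` and identities turns a classical countermodel into a Kripke one, and taking
`A = D × W` with the projections turns a Kripke countermodel into a classical one. -/

open Function

lemma update_val_apply_two {α : Type} (G : ℕ → α) (v : Fin 2) (c : α) :
    update G (v : ℕ) c 2 = G 2 :=
  update_of_ne (by omega) _ _

lemma comp_update_val_comp_val {α β : Type} (f : α → β) (G : ℕ → α) (v : Fin 2) (c : α) :
    f ∘ update G (v : ℕ) c ∘ Fin.val = update (f ∘ G ∘ Fin.val) v (f c) := by
  rw [update_comp_eq_of_injective _ Fin.val_injective, comp_update]

lemma update_two_comp_val {α : Type} (G : ℕ → α) (c : α) :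
    update G 2 c ∘ (Fin.val : Fin 2 → ℕ) = G ∘ Fin.val :=
  update_comp_eq_of_forall_ne _ _ fun v => by omega

theorem cVal_sTr_iff_mValS5 {A W D : Type} (I : W → D → Prop) {fD : A → D} {fW : A → W}
    (hD : Surjective fD) (hW : Surjective fW) (φ : MF) (G : ℕ → A) :
    CVal (fun a b => I (fW b) (fD a)) G (STr φ) ↔ MValS5 I (fW (G 2)) (fD ∘ G ∘ Fin.val) φ := by
  induction φ generalizing G with
  | falsum => exact Iff.rfl
  | atom v => exact Iff.rfl
  | conj φ ψ ihφ ihψ => exact and_congr (ihφ G) (ihψ G)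
  | disj φ ψ ihφ ihψ => exact or_congr (ihφ G) (ihψ G)
  | impl φ ψ ihφ ihψ => exact imp_congr (ihφ G) (ihψ G)
  | box φ ih =>
    simp only [STr, CVal, MValS5, ih, update_self, update_two_comp_val]
    exact (hW.forall (p := (MValS5 I · _ φ))).symm
  | all v φ ih =>
    simp only [STr, CVal, MValS5, ih, update_val_apply_two, comp_update_val_comp_val]
    exact (hD.forall (p := fun a => MValS5 I _ (update _ v a) φ)).symm
  | ex v φ ih =>
    simp only [STr, CVal, MValS5, ih, update_val_apply_two, comp_update_val_comp_val]
    exact (hD.exists (p := fun a => MValS5 I _ (update _ v a) φ)).symm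

/-- A modal formula `φ` with a single unary letter `Q` and
variables among `{x, y}` is true in every predicate Kripke model with constant
domains based on a frame with universal accessibility relation if and only if
its standard translation `STr(φ)` is true in every classical first-order
structure for the language of one binary predicate `P`. -/
theorem stmt17 (φ : MF) :
    (∀ (W D : Type), Nonempty W → Nonempty D →
        ∀ (I : W → D → Prop) (w : W) (g : Fin 2 → D), MValS5 I w g φ) ↔
      (∀ (A : Type), Nonempty A →
        ∀ (Pr : A → A → Prop) (g : ℕ → A), CVal Pr g (STr φ)) := by
  constructor
  · intro hKripke A hA Pr g
    exact (cVal_sTr_iff_mValS5 (fun z a => Pr a z) surjective_id surjective_id φ g).2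
      (hKripke A A hA hA _ _ _)
  · intro hClassical W D hW hD I w g
    let G : ℕ → D × W := fun n => (g (Fin.ofNat 2 n), w)
    have hg : Prod.fst ∘ G ∘ Fin.val = g := funext fun v => congrArg g (Fin.ofNat_val_eq_self v)
    have hG := (cVal_sTr_iff_mValS5 I Prod.fst_surjective Prod.snd_surjective φ G).1
      (hClassical (D × W) inferInstance _ G)
    rwa [hg] at hG
end
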